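/- arXiv:2401.17254 — 2 statements merged into one kernel-verified Lean document; each statement's English description precedes it below -/
import Mathlib

section
/- For each fixed positive integer L, the function f(p, L) converges pointwise as p → 0⁺ to Σ_{l=1}^{L} 4/(4l² − 1). -/
/-! Under the product Bernoulli measure, `1 - a_k(p)` is the total weight `p^|x| (1-p)^(k-|x|)` of
the strings `x` with two adjacent ones. Every such string has at least two ones, and exactly `k - 1`
of them have exactly two (one for each adjacent pair), so `(1 - a_k(p)) / p² → k - 1`; in particular
`a_k(p) → 1`. Dividing numerator and denominator of the `l`-th summand of `f(p, L)` by `p⁴`, it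
tends to `(1 + 1 + 1 + 1) / ((2l + 1)(2l - 1)) = 4 / (4l² - 1)`. -/

open MeasureTheory Filter

/-- The Bernoulli(p) measure on `Bool`: `true` has probability `p`. -/
noncomputable def bern (p : ℝ) : Measure Bool :=
  ENNReal.ofReal p • Measure.dirac true + ENNReal.ofReal (1 - p) • Measure.dirac false

/-- The law of a random subset of `{0, …, N}` where each element is included
independently with probability `p`, encoded by indicator functions. -/
noncomputable def prodBern (p : ℝ) (N : ℕ) : Measure (Fin (N + 1) → Bool) :=
  Measure.pi fun _ => bern p

/-- `n` belongs to the sumset `A + A`, where `A ⊆ {0,…,N}` is encoded by `ω`. -/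
def inSumset {N : ℕ} (ω : Fin (N + 1) → Bool) (n : ℕ) : Prop :=
  ∃ a b : Fin (N + 1), ω a = true ∧ ω b = true ∧ (a : ℕ) + (b : ℕ) = n

/-- `Y`: the number of integers in `{0,…,N}` missing from `A + A`. -/
noncomputable def Ycount (N : ℕ) (ω : Fin (N + 1) → Bool) : ℕ :=
  {n : ℕ | n ≤ N ∧ ¬ inSumset ω n}.ncard

/-- `Z`: the number of integers in `{N+1,…,2N}` missing from `A + A`. -/
noncomputable def Zcount (N : ℕ) (ω : Fin (N + 1) → Bool) : ℕ :=
  {n : ℕ | N + 1 ≤ n ∧ n ≤ 2 * N ∧ ¬ inSumset ω n}.ncard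

/-- `W`: the number of integers in `{0,…,2N}` missing from `A + A`. -/
noncomputable def Wcount (N : ℕ) (ω : Fin (N + 1) → Bool) : ℕ :=
  {n : ℕ | n ≤ 2 * N ∧ ¬ inSumset ω n}.ncard

/-- `Ỹ`: the number of integers in `{0,…,⌊N/2⌋}` missing from `A + A`. -/
noncomputable def Ytilde (N : ℕ) (ω : Fin (N + 1) → Bool) : ℕ :=
  {n : ℕ | n ≤ N / 2 ∧ ¬ inSumset ω n}.ncard

/-- `Z̃`: the number of integers in `{⌊3N/2⌋+1,…,2N}` missing from `A + A`. -/
noncomputable def Ztilde (N : ℕ) (ω : Fin (N + 1) → Bool) : ℕ :=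
  {n : ℕ | 3 * N / 2 + 1 ≤ n ∧ n ≤ 2 * N ∧ ¬ inSumset ω n}.ncard

/-- A string of `k` bits has no two consecutive ones. -/
def noTwoOnes {k : ℕ} (x : Fin k → Bool) : Prop :=
  ∀ i : ℕ, ∀ hi : i + 1 < k, ¬(x ⟨i, Nat.lt_of_succ_lt hi⟩ = true ∧ x ⟨i + 1, hi⟩ = true)

/-- `a_k`: the probability that `k` i.i.d. Bernoulli(p) bits contain no two
consecutive 1's (with `a_0 = 1`). -/
noncomputable def aseq (p : ℝ) (k : ℕ) : ℝ :=
  ((Measure.pi fun _ : Fin k => bern p) {x | noTwoOnes x}).toReal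

/-- The partial sums `f(p, L)` of `p⁴` times the series for the second moment. -/
noncomputable def fPL (p : ℝ) (L : ℕ) : ℝ :=
  ∑ l ∈ Finset.range L,
    p ^ 4 * (aseq p (2 * (l + 1)) + (1 - p) * aseq p l +
        (1 - p) * aseq p (l + 1) * aseq p (2 * (l + 1)) +
        (1 - p) ^ 2 * aseq p (l + 1) * aseq p l) /
      ((1 - aseq p (2 * (l + 1) + 2)) * (1 - aseq p (2 * (l + 1))))

open Finset Topology

section Counting

variable {k : ℕ}

def onesSet (x : Fin k → Bool) : Finset (Fin k) := univ.filter fun i => x i = true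

def adjPair (i : Fin (k - 1)) : Finset (Fin k) := {⟨i, by omega⟩, ⟨i + 1, by omega⟩}

lemma card_adjPair (i : Fin (k - 1)) : #(adjPair i) = 2 :=
  card_pair (by simp [Fin.ext_iff])

lemma adjPair_injective : Function.Injective (adjPair (k := k)) := by
  intro i j h
  have hi : (⟨i, by omega⟩ : Fin k) ∈ adjPair j := h ▸ mem_insert_self _ _
  have hj : (⟨j, by omega⟩ : Fin k) ∈ adjPair i := h ▸ mem_insert_self _ _
  simp only [adjPair, mem_insert, mem_singleton, Fin.ext_iff] at hi hj
  omega

lemma not_noTwoOnes_iff {x : Fin k → Bool} :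
    ¬noTwoOnes x ↔ ∃ i : Fin (k - 1), adjPair i ⊆ onesSet x := by
  simp only [noTwoOnes, not_forall, not_not, adjPair, insert_subset_iff, singleton_subset_iff,
    onesSet, mem_filter, mem_univ, true_and]
  constructor
  · rintro ⟨i, hi, h⟩
    exact ⟨⟨i, by omega⟩, h⟩
  · rintro ⟨i, h⟩
    exact ⟨i, by omega, h⟩

instance (x : Fin k → Bool) : Decidable (noTwoOnes x) :=
  decidable_of_iff (∀ i, ¬adjPair i ⊆ onesSet x) <| by
    rw [← not_exists, ← not_noTwoOnes_iff, not_not]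

lemma two_le_card_onesSet_of_not_noTwoOnes {x : Fin k → Bool} (hx : ¬noTwoOnes x) :
    2 ≤ #(onesSet x) := by
  obtain ⟨i, hi⟩ := not_noTwoOnes_iff.1 hx
  exact card_adjPair i ▸ card_le_card hi

lemma onesSet_decide_mem (s : Finset (Fin k)) : onesSet (fun j => decide (j ∈ s)) = s := by
  ext; simp [onesSet]

lemma onesSet_injective : Function.Injective (onesSet (k := k)) := by
  intro x y h
  funext j
  simpa [onesSet] using congrArg (j ∈ ·) h

lemma card_filter_not_noTwoOnes_card_onesSet_eq_two :
    #{x : Fin k → Bool | ¬noTwoOnes x ∧ #(onesSet x) = 2} = k - 1 := by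
  rw [← Fintype.card_fin (k - 1), ← card_univ]
  symm
  refine card_nbij (fun i j => decide (j ∈ adjPair i)) (fun i _ => ?_) (fun i _ j _ h => ?_)
    (fun x hx => ?_)
  · simp only [coe_filter, mem_univ, true_and, Set.mem_ofPred_eq, not_noTwoOnes_iff,
      onesSet_decide_mem, card_adjPair, and_true]
    exact ⟨i, subset_refl _⟩
  · have := congrArg onesSet h
    simp only [onesSet_decide_mem] at this
    exact adjPair_injective this
  · simp only [coe_filter, mem_univ, true_and, Set.mem_ofPred_eq, not_noTwoOnes_iff] at hx
    obtain ⟨⟨i, hi⟩, hcard⟩ := hx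
    refine ⟨i, mem_coe.2 (mem_univ _), onesSet_injective ?_⟩
    rw [onesSet_decide_mem]
    exact eq_of_subset_of_card_le hi (by rw [hcard, card_adjPair])

end Counting

section Weight

variable {k : ℕ}

def weight (p : ℝ) (x : Fin k → Bool) : ℝ :=
  p ^ #(onesSet x) * (1 - p) ^ #(onesSet x)ᶜ

lemma weight_eq_sq_mul (p : ℝ) {x : Fin k → Bool} (hx : 2 ≤ #(onesSet x)) :
    weight p x = p ^ 2 * (p ^ (#(onesSet x) - 2) * (1 - p) ^ #(onesSet x)ᶜ) := by
  rw [weight, ← Nat.add_sub_cancel' hx, pow_add, Nat.add_sub_cancel_left, mul_assoc]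

variable {p : ℝ}

lemma isProbabilityMeasure_bern (hp₀ : 0 ≤ p) (hp₁ : p ≤ 1) : IsProbabilityMeasure (bern p) :=
  ⟨by simp [bern, ← ENNReal.ofReal_add hp₀ (sub_nonneg.2 hp₁)]⟩

lemma bern_singleton (b : Bool) :
    bern p {b} = ENNReal.ofReal (if b then p else 1 - p) := by
  cases b <;> simp [bern]

lemma pi_bern_singleton (hp₀ : 0 ≤ p) (hp₁ : p ≤ 1) (x : Fin k → Bool) :
    Measure.pi (fun _ : Fin k => bern p) {x} = ENNReal.ofReal (weight p x) := by
  have := isProbabilityMeasure_bern hp₀ hp₁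
  rw [← Set.univ_pi_singleton, Measure.pi_pi]
  simp_rw [bern_singleton]
  rw [← ENNReal.ofReal_prod_of_nonneg fun i _ => by split_ifs <;> linarith, prod_ite,
    prod_const, prod_const, weight, onesSet, compl_filter]

lemma toReal_pi_bern_finset (hp₀ : 0 ≤ p) (hp₁ : p ≤ 1) (s : Finset (Fin k → Bool)) :
    (Measure.pi (fun _ : Fin k => bern p) s).toReal = ∑ x ∈ s, weight p x := by
  rw [← sum_measure_singleton, ENNReal.toReal_sum fun x _ => by simp [pi_bern_singleton hp₀ hp₁]]
  refine sum_congr rfl fun x _ => ?_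
  rw [pi_bern_singleton hp₀ hp₁, ENNReal.toReal_ofReal]
  exact mul_nonneg (pow_nonneg hp₀ _) (pow_nonneg (sub_nonneg.2 hp₁) _)

lemma sum_weight_eq_one (hp₀ : 0 ≤ p) (hp₁ : p ≤ 1) : ∑ x : Fin k → Bool, weight p x = 1 := by
  have := isProbabilityMeasure_bern hp₀ hp₁
  rw [← toReal_pi_bern_finset hp₀ hp₁, coe_univ, measure_univ, ENNReal.toReal_one]

lemma one_sub_aseq_eq_sum (hp₀ : 0 ≤ p) (hp₁ : p ≤ 1) :
    1 - aseq p k = ∑ x : Fin k → Bool with ¬noTwoOnes x, weight p x := by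
  rw [← sum_weight_eq_one hp₀ hp₁, ← sum_filter_add_sum_filter_not univ noTwoOnes,
    ← toReal_pi_bern_finset hp₀ hp₁, aseq, coe_filter]
  simp only [mem_univ, true_and]
  exact add_sub_cancel_left _ _

end Weight

theorem tendsto_one_sub_aseq_div_sq (k : ℕ) :
    Tendsto (fun p => (1 - aseq p k) / p ^ 2) (𝓝[>] 0) (𝓝 ((k - 1 : ℕ) : ℝ)) := by
  let bad : Finset (Fin k → Bool) := {x | ¬noTwoOnes x}
  let g (p : ℝ) : ℝ := ∑ x ∈ bad, p ^ (#(onesSet x) - 2) * (1 - p) ^ #(onesSet x)ᶜ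
  have hg : g 0 = ((k - 1 : ℕ) : ℝ) := by
    rw [← card_filter_not_noTwoOnes_card_onesSet_eq_two, ← filter_filter, ← sum_boole]
    refine sum_congr rfl fun x hx => ?_
    have := two_le_card_onesSet_of_not_noTwoOnes (mem_filter.1 hx).2
    have hiff : #(onesSet x) - 2 = 0 ↔ #(onesSet x) = 2 := by omega
    simp [zero_pow_eq, hiff]
  have hlim : Tendsto g (𝓝[>] 0) (𝓝 (g 0)) :=
    (Continuous.tendsto (by fun_prop) 0).mono_left nhdsWithin_le_nhds
  rw [← hg]
  refine hlim.congr' ?_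
  filter_upwards [Ioo_mem_nhdsGT one_pos] with p hp
  rw [one_sub_aseq_eq_sum hp.1.le hp.2.le, sum_div]
  refine sum_congr rfl fun x hx => ?_
  rw [weight_eq_sq_mul p (two_le_card_onesSet_of_not_noTwoOnes (mem_filter.1 hx).2)]
  field_simp [hp.1.ne']

theorem tendsto_aseq (k : ℕ) : Tendsto (fun p => aseq p k) (𝓝[>] 0) (𝓝 1) := by
  have hsq : Tendsto (fun p : ℝ => p ^ 2) (𝓝[>] 0) (𝓝 0) :=
    ((continuous_pow 2).tendsto' 0 0 (zero_pow two_ne_zero)).mono_left nhdsWithin_le_nhds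
  have hgap : Tendsto (fun p => 1 - aseq p k) (𝓝[>] 0) (𝓝 0) := by
    refine (mul_zero ((k - 1 : ℕ) : ℝ) ▸ (tendsto_one_sub_aseq_div_sq k).mul hsq).congr' ?_
    filter_upwards [self_mem_nhdsWithin] with p (hp : 0 < p)
    exact div_mul_cancel₀ _ (pow_ne_zero 2 hp.ne')
  simpa using (tendsto_const_nhds (x := (1 : ℝ))).sub hgap

theorem stmt18_general (L : ℕ) :
    Filter.Tendsto (fun p : ℝ => fPL p L) (nhdsWithin 0 (Set.Ioi 0))
      (nhds (∑ l ∈ Finset.range L, 4 / (4 * ((l : ℝ) + 1) ^ 2 - 1))) := by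
  refine tendsto_finsetSum _ fun l _ => ?_
  have hq : Tendsto (fun p : ℝ => 1 - p) (𝓝[>] 0) (𝓝 1) := by
    simpa using ((continuous_sub_left (1 : ℝ)).tendsto 0).mono_left nhdsWithin_le_nhds
  have hnum := (((tendsto_aseq (2 * (l + 1))).add (hq.mul (tendsto_aseq l))).add
      ((hq.mul (tendsto_aseq (l + 1))).mul (tendsto_aseq (2 * (l + 1))))).add
      (((hq.pow 2).mul (tendsto_aseq (l + 1))).mul (tendsto_aseq l))
  have hden := (tendsto_one_sub_aseq_div_sq (2 * (l + 1) + 2)).mul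
    (tendsto_one_sub_aseq_div_sq (2 * (l + 1)))
  rw [show 2 * (l + 1) + 2 - 1 = 2 * l + 3 by omega, show 2 * (l + 1) - 1 = 2 * l + 1 by omega]
    at hden
  have hlim : (1 + 1 * 1 + 1 * 1 * 1 + 1 ^ 2 * 1 * 1 : ℝ) /
      (((2 * l + 3 : ℕ) : ℝ) * ((2 * l + 1 : ℕ) : ℝ)) = 4 / (4 * ((l : ℝ) + 1) ^ 2 - 1) := by
    push_cast
    ring
  refine (hlim ▸ hnum.div hden (by positivity)).congr' ?_
  filter_upwards [self_mem_nhdsWithin] with p (hp : 0 < p)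
  simp only [Pi.div_apply]
  field_simp

/-- For each fixed `L`, `f(p, L) → Σ_{l=1}^{L} 4/(4l² - 1)` as `p → 0⁺`. -/
theorem stmt18 (L : ℕ) (hL : 1 ≤ L) :
    Filter.Tendsto (fun p : ℝ => fPL p L) (nhdsWithin 0 (Set.Ioi 0))
      (nhds (∑ l ∈ Finset.range L, 4 / (4 * ((l : ℝ) + 1) ^ 2 - 1))) :=
  stmt18_general L
end

section
/- Writing S(p) := lim_{N→∞} E[Y_{N,p}²] for the large-N limit of the second moment of the number of missing summands in the left fringe, one has lim_{p→0⁺} p⁴·S(p) = 4; equivalently, S(p) = 4/p⁴ + δ(p) where δ(p)/p^{−4} → 0 as p → 0⁺. -/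
open MeasureTheory Filter

section Aux
open Finset

variable {p : ℝ} {N : ℕ}

noncomputable def wt (p : ℝ) (b : Bool) : ℝ := if b then p else 1 - p

noncomputable def wprod (p : ℝ) {N : ℕ} (ω : Fin (N+1) → Bool) : ℝ := ∏ i, wt p (ω i)

lemma wt_nonneg (hp0 : 0 ≤ p) (hp1 : p ≤ 1) (b : Bool) : 0 ≤ wt p b := by
  cases b <;> simp [wt] <;> linarith

lemma wprod_nonneg (hp0 : 0 ≤ p) (hp1 : p ≤ 1) (ω : Fin (N+1) → Bool) : 0 ≤ wprod p ω :=
  Finset.prod_nonneg fun i _ => wt_nonneg hp0 hp1 _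

lemma bern_singleton_s19 (hp0 : 0 ≤ p) (hp1 : p ≤ 1) (b : Bool) :
    bern p {b} = ENNReal.ofReal (wt p b) := by
  cases b <;> simp [bern, Measure.dirac_apply, wt]

lemma bern_prob (hp0 : 0 ≤ p) (hp1 : p ≤ 1) : IsProbabilityMeasure (bern p) := by
  constructor
  have : (Set.univ : Set Bool) = {true} ∪ {false} := by
    ext b; cases b <;> simp
  rw [this]
  have hd : Disjoint ({true} : Set Bool) {false} := by simp
  rw [measure_union hd (measurableSet_singleton _)]
  rw [bern_singleton_s19 hp0 hp1, bern_singleton_s19 hp0 hp1]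
  rw [← ENNReal.ofReal_add (by simpa [wt]) (by simp [wt]; linarith)]
  simp [wt]

lemma prodBern_prob (hp0 : 0 ≤ p) (hp1 : p ≤ 1) : IsProbabilityMeasure (prodBern p N) := by
  haveI := bern_prob hp0 hp1
  unfold prodBern; infer_instance

lemma prodBern_singleton (hp0 : 0 ≤ p) (hp1 : p ≤ 1) (ω : Fin (N+1) → Bool) :
    ((prodBern p N) {ω}).toReal = wprod p ω := by
  haveI := bern_prob hp0 hp1
  rw [show ({ω} : Set _) = Set.univ.pi (fun i => {ω i}) from (Set.univ_pi_singleton ω).symm,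
    prodBern, Measure.pi_pi]
  rw [ENNReal.toReal_prod]
  unfold wprod
  refine Finset.prod_congr rfl fun i _ => ?_
  rw [bern_singleton_s19 hp0 hp1, ENNReal.toReal_ofReal (wt_nonneg hp0 hp1 _)]

lemma integral_eq_sum (hp0 : 0 ≤ p) (hp1 : p ≤ 1) (f : (Fin (N+1) → Bool) → ℝ) :
    ∫ ω, f ω ∂ prodBern p N = ∑ ω : Fin (N+1) → Bool, wprod p ω * f ω := by
  haveI := prodBern_prob (N := N) hp0 hp1
  rw [integral_fintype Integrable.of_finite]
  refine Finset.sum_congr rfl fun ω _ => ?_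
  rw [measureReal_def, prodBern_singleton hp0 hp1, smul_eq_mul]

lemma sum_wprod (hp0 : 0 ≤ p) (hp1 : p ≤ 1) :
    ∑ ω : Fin (N+1) → Bool, wprod p ω = 1 := by
  haveI := prodBern_prob (N := N) hp0 hp1
  have h := integral_eq_sum (N := N) hp0 hp1 (fun _ => (1:ℝ))
  simpa using h.symm

end Aux

section Aux2
open Finset

variable {p : ℝ} {N : ℕ}

def extb {N : ℕ} (ω : Fin (N+1) → Bool) (a : ℕ) : Bool :=
  if h : a < N + 1 then ω ⟨a, h⟩ else false

noncomputable def cE {N : ℕ} (E : Finset (ℕ × ℕ)) (ω : Fin (N+1) → Bool) : ℝ :=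
  ∏ e ∈ E, (if extb ω e.1 && extb ω e.2 then (0:ℝ) else 1)

noncomputable def dF {N : ℕ} (F : Finset ℕ) (ω : Fin (N+1) → Bool) : ℝ :=
  ∏ v ∈ F, (if extb ω v then (0:ℝ) else 1)

noncomputable def QE (p : ℝ) (N : ℕ) (E : Finset (ℕ × ℕ)) (F : Finset ℕ) : ℝ :=
  ∑ ω : Fin (N+1) → Bool, wprod p ω * (cE E ω * dF F ω)

lemma extb_lt {ω : Fin (N+1) → Bool} {a : ℕ} (h : a < N + 1) : extb ω a = ω ⟨a, h⟩ := by
  simp [extb, h]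

lemma extb_update_ne {ω : Fin (N+1) → Bool} {v : Fin (N+1)} {b : Bool} {a : ℕ}
    (h : a ≠ (v : ℕ)) : extb (Function.update ω v b) a = extb ω a := by
  unfold extb
  split
  · next ha =>
      have hne : (⟨a, ha⟩ : Fin (N+1)) ≠ v := by simpa [Fin.ext_iff] using h
      exact Function.update_of_ne hne _ _
  · rfl

lemma extb_update_self {ω : Fin (N+1) → Bool} {v : Fin (N+1)} {b : Bool} :
    extb (Function.update ω v b) (v : ℕ) = b := by
  rw [extb_lt v.isLt]
  simp

lemma cE_nonneg {E : Finset (ℕ × ℕ)} {ω : Fin (N+1) → Bool} : 0 ≤ cE E ω :=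
  Finset.prod_nonneg fun e _ => by split <;> norm_num

lemma dF_nonneg {F : Finset ℕ} {ω : Fin (N+1) → Bool} : 0 ≤ dF F ω :=
  Finset.prod_nonneg fun e _ => by split <;> norm_num

lemma cE_update {E : Finset (ℕ × ℕ)} {ω : Fin (N+1) → Bool} {v : Fin (N+1)} {b : Bool}
    (h : ∀ e ∈ E, (v : ℕ) ≠ e.1 ∧ (v : ℕ) ≠ e.2) :
    cE E (Function.update ω v b) = cE E ω := by
  refine Finset.prod_congr rfl fun e he => ?_
  rw [extb_update_ne (fun hc => (h e he).1 hc.symm), extb_update_ne (fun hc => (h e he).2 hc.symm)]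

lemma dF_update {F : Finset ℕ} {ω : Fin (N+1) → Bool} {v : Fin (N+1)} {b : Bool}
    (h : (v : ℕ) ∉ F) :
    dF F (Function.update ω v b) = dF F ω := by
  refine Finset.prod_congr rfl fun w hw => ?_
  rw [extb_update_ne (fun hc => h (hc ▸ hw))]

lemma sum_split (v : Fin (N+1)) (g : (Fin (N+1) → Bool) → ℝ) :
    ∑ ω : Fin (N+1) → Bool, g ω
      = ∑ ω ∈ Finset.univ.filter (fun ω => ω v = false),
          (g ω + g (Function.update ω v true)) := by
  classical
  rw [Finset.sum_add_distrib]
  rw [← Finset.sum_filter_add_sum_filter_not Finset.univ (fun ω => ω v = false) g]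
  congr 1
  refine Finset.sum_nbij' (fun ω => Function.update ω v false)
    (fun ω => Function.update ω v true) ?_ ?_ ?_ ?_ ?_
  · intro a _; simp
  · intro a _; simp
  · intro a ha
    simp only [Finset.mem_filter, Finset.mem_univ, true_and] at ha
    show Function.update (Function.update a v false) v true = a
    rw [Function.update_idem]
    have h2 : a v = true := by simpa using ha
    rw [← h2]; exact Function.update_eq_self v a
  · intro a ha
    simp only [Finset.mem_filter, Finset.mem_univ, true_and] at ha
    show Function.update (Function.update a v true) v false = a
    rw [Function.update_idem, ← ha]
    exact Function.update_eq_self v a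
  · intro a ha
    simp only [Finset.mem_filter, Finset.mem_univ, true_and] at ha
    show g a = g (Function.update (Function.update a v false) v true)
    congr 1
    rw [Function.update_idem]
    have h2 : a v = true := by simpa using ha
    rw [← h2]; exact (Function.update_eq_self v a).symm

lemma wprod_update (ω : Fin (N+1) → Bool) (v : Fin (N+1)) (b : Bool) :
    wprod p (Function.update ω v b) = wt p b * ∏ i ∈ Finset.univ.erase v, wt p (ω i) := by
  unfold wprod
  have : (fun i => wt p (Function.update ω v b i))
      = Function.update (fun i => wt p (ω i)) v (wt p b) := by
    funext i
    by_cases h : i = v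
    · subst h; simp
    · simp [Function.update_of_ne h]
  calc ∏ i, wt p (Function.update ω v b i)
      = ∏ i, Function.update (fun i => wt p (ω i)) v (wt p b) i := by rw [this]
    _ = wt p b * ∏ i ∈ Finset.univ \ {v}, wt p (ω i) :=
        Finset.prod_update_of_mem (Finset.mem_univ v) _ _
    _ = wt p b * ∏ i ∈ Finset.univ.erase v, wt p (ω i) := by rw [← Finset.erase_eq]

lemma sum_false_restrict (v : Fin (N+1)) (k : (Fin (N+1) → Bool) → ℝ)
    (hk : ∀ ω b, k (Function.update ω v b) = k ω) :
    ∑ ω : Fin (N+1) → Bool, wprod p ω * k ω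
      = ∑ ω ∈ Finset.univ.filter (fun ω => ω v = false),
          (∏ i ∈ Finset.univ.erase v, wt p (ω i)) * k ω := by
  rw [sum_split v (fun ω => wprod p ω * k ω)]
  refine Finset.sum_congr rfl fun ω hω => ?_
  have hωv : ω v = false := by simpa using hω
  have h1 : wprod p ω = wt p false * ∏ i ∈ Finset.univ.erase v, wt p (ω i) := by
    rw [← hωv]; exact (Finset.mul_prod_erase Finset.univ _ (Finset.mem_univ v)).symm
  rw [wprod_update, hk, h1]
  simp [wt]
  ring

end Aux2
section Aux3
open Finset

variable {p : ℝ} {N : ℕ}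

lemma edge_eq {e₁ e₂ : ℕ × ℕ} (hs : e₁.1 + e₁.2 = e₂.1 + e₂.2)
    (o1 : e₁.1 < e₁.2) (o2 : e₂.1 < e₂.2) {u : ℕ}
    (hu1 : u = e₁.1 ∨ u = e₁.2) (hu2 : u = e₂.1 ∨ u = e₂.2) : e₁ = e₂ := by
  obtain ⟨a, b⟩ := e₁; obtain ⟨c, d⟩ := e₂
  simp only [Prod.mk.injEq] at *
  omega

lemma exists_leaf {m n : ℕ} (hmn : m ≤ n) {E : Finset (ℕ × ℕ)}
    (hE : ∀ e ∈ E, e.1 < e.2 ∧ (e.1 + e.2 = m ∨ e.1 + e.2 = n)) (hne : E.Nonempty) :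
    ∃ e ∈ E, ∃ v : ℕ, (v = e.1 ∨ v = e.2) ∧ ∀ e' ∈ E, (v = e'.1 ∨ v = e'.2) → e' = e := by
  by_contra hcon
  push_neg at hcon
  -- every endpoint has two distinct edges
  have hS : ∀ v : ℕ, (∃ e ∈ E, v = e.1 ∨ v = e.2) → False := by
    intro v0
    induction v0 using Nat.strong_induction_on with
    | _ v ih =>
    rintro ⟨e, he, hv⟩
    obtain ⟨e', he', hv', hne'⟩ := hcon e he v hv
    have h1 := hE e he
    have h2 := hE e' he'
    have hsumne : e.1 + e.2 ≠ e'.1 + e'.2 := by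
      intro hc
      exact hne' (edge_eq hc.symm h2.1 h1.1 hv' hv)
    have hmn' : m < n := by
      rcases h1.2 with hA | hA <;> rcases h2.2 with hB | hB <;> omega
    -- one of e, e' has sum n and touches v
    obtain ⟨en, hen, hvn, hsn⟩ : ∃ en ∈ E, (v = en.1 ∨ en.2 = v) ∧ en.1 + en.2 = n := by
      rcases h1.2 with hA | hA
      · refine ⟨e', he', ?_, ?_⟩ <;> rcases h2.2 with hB | hB <;>
          first | omega | (rcases hv' with h | h <;> simp [h]) | tauto
      · exact ⟨e, he, by tauto, hA⟩
    -- w : the partner of v along en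
    obtain ⟨w, hw, hvw⟩ : ∃ w : ℕ, (w = en.1 ∨ w = en.2) ∧ v + w = n := by
      rcases hvn with h | h
      · exact ⟨en.2, Or.inr rfl, by omega⟩
      · exact ⟨en.1, Or.inl rfl, by omega⟩
    -- w has a second edge, of sum m
    obtain ⟨em, hem, hwm, hnem⟩ := hcon en hen w hw
    have h3 := hE em hem
    have hsm : em.1 + em.2 = m := by
      rcases h3.2 with hA | hA
      · exact hA
      · exfalso
        exact hnem (edge_eq (by omega) h3.1 (hE en hen).1 hwm hw)
    -- t : the partner of w along em
    obtain ⟨t, ht, hwt⟩ : ∃ t : ℕ, (t = em.1 ∨ t = em.2) ∧ t + w = m := by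
      rcases hwm with h | h
      · exact ⟨em.2, Or.inr rfl, by omega⟩
      · exact ⟨em.1, Or.inl rfl, by omega⟩
    have htv : t < v := by omega
    exact ih t htv ⟨em, hem, by tauto⟩
  obtain ⟨e, he⟩ := hne
  exact hS e.1 ⟨e, he, Or.inl rfl⟩

end Aux3
section Aux4
open Finset

variable {p : ℝ} {N : ℕ}

lemma QE_peel {E : Finset (ℕ × ℕ)} {F : Finset ℕ} {e : ℕ × ℕ} (heE : e ∈ E)
    (hvalid : ∀ e' ∈ E, e'.1 < e'.2 ∧ e'.2 ≤ N)
    (hF : ∀ w ∈ F, ∀ e' ∈ E, w ≠ e'.1 ∧ w ≠ e'.2)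
    {v u : ℕ} (hvu : (v = e.1 ∧ u = e.2) ∨ (v = e.2 ∧ u = e.1))
    (hleaf : ∀ e' ∈ E, (v = e'.1 ∨ v = e'.2) → e' = e) :
    QE p N E F = (1-p) * QE p N (E.erase e) F
      + p * QE p N ((E.erase e).filter (fun e' => ¬(e'.1 = u ∨ e'.2 = u))) (insert u F) := by
  classical
  have h1 := hvalid e heE
  have hvN : v < N + 1 := by rcases hvu with ⟨h, _⟩ | ⟨h, _⟩ <;> omega
  have huN : u < N + 1 := by rcases hvu with ⟨_, h⟩ | ⟨_, h⟩ <;> omega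
  have hvune : v ≠ u := by rcases hvu with ⟨h, h'⟩ | ⟨h, h'⟩ <;> omega
  set vf : Fin (N+1) := ⟨v, hvN⟩ with hvf
  set E' := E.erase e with hE'
  set Eu' := E'.filter (fun e' => ¬(e'.1 = u ∨ e'.2 = u)) with hEu'
  have hvnotF : v ∉ F := fun hc => by
    rcases hvu with ⟨h, _⟩ | ⟨h, _⟩
    · exact (hF v hc e heE).1 h
    · exact (hF v hc e heE).2 h
  have hunotF : u ∉ F := fun hc => by
    rcases hvu with ⟨_, h⟩ | ⟨_, h⟩
    · exact (hF u hc e heE).2 h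
    · exact (hF u hc e heE).1 h
  have hvE' : ∀ e' ∈ E', (v : ℕ) ≠ e'.1 ∧ (v : ℕ) ≠ e'.2 := by
    intro e' he'
    constructor <;> intro hc <;>
      exact (Finset.ne_of_mem_erase he') (hleaf e' (Finset.mem_of_mem_erase he') (by tauto))
  -- the three v-invariant integrands
  have hk1 : ∀ (ω : Fin (N+1) → Bool) (b : Bool),
      cE E' (Function.update ω vf b) * dF F (Function.update ω vf b) = cE E' ω * dF F ω := by
    intro ω b
    rw [cE_update hvE', dF_update (by simpa using hvnotF)]
  have hk2 : ∀ (ω : Fin (N+1) → Bool) (b : Bool),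
      cE Eu' (Function.update ω vf b) * dF (insert u F) (Function.update ω vf b)
        = cE Eu' ω * dF (insert u F) ω := by
    intro ω b
    rw [cE_update (fun e' he' => hvE' e' (Finset.mem_of_mem_filter e' he')),
      dF_update (by simp [hvf, hvune, hvnotF])]
  -- main computation
  unfold QE
  rw [sum_split vf, sum_false_restrict vf _ hk1, sum_false_restrict vf _ hk2,
    Finset.mul_sum, Finset.mul_sum, ← Finset.sum_add_distrib]
  refine Finset.sum_congr rfl fun ω hω => ?_
  have hωv : ω vf = false := by simpa using hω
  have hextv : extb ω v = false := by rw [extb_lt hvN]; exact hωv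
  set R := ∏ i ∈ Finset.univ.erase vf, wt p (ω i) with hR
  -- first summand: ω itself
  have hA : wprod p ω * (cE E ω * dF F ω) = (1-p) * (R * (cE E' ω * dF F ω)) := by
    have hwr : wprod p ω = (1-p) * R := by
      have h0 : wt p (ω vf) * R = wprod p ω :=
        Finset.mul_prod_erase Finset.univ (fun i => wt p (ω i)) (Finset.mem_univ vf)
      rw [← h0, hωv]
      simp [wt]
    have hce : cE E ω = cE E' ω := by
      have h0 : (if extb ω e.1 && extb ω e.2 then (0:ℝ) else 1) * cE E' ω = cE E ω :=
        Finset.mul_prod_erase E (fun e' => if extb ω e'.1 && extb ω e'.2 then (0:ℝ) else 1) heE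
      have h1' : (if extb ω e.1 && extb ω e.2 then (0:ℝ) else 1) = 1 := by
        rcases hvu with ⟨h, _⟩ | ⟨h, _⟩ <;> rw [← h] <;> simp [hextv]
      rw [← h0, h1', one_mul]
    rw [hwr, hce]; ring
  -- second summand: update ω vf true
  have hB : wprod p (Function.update ω vf true)
        * (cE E (Function.update ω vf true) * dF F (Function.update ω vf true))
      = p * (R * (cE Eu' ω * dF (insert u F) ω)) := by
    have hwr : wprod p (Function.update ω vf true) = p * R := by
      rw [wprod_update, hR]; simp [wt]
    have hdf : dF F (Function.update ω vf true) = dF F ω :=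
      dF_update (by simpa using hvnotF)
    have hce : cE E (Function.update ω vf true)
        = (if extb ω u then (0:ℝ) else 1) * cE E' ω := by
      have h0 : (if extb (Function.update ω vf true) e.1
            && extb (Function.update ω vf true) e.2 then (0:ℝ) else 1)
            * cE E' (Function.update ω vf true) = cE E (Function.update ω vf true) :=
        Finset.mul_prod_erase E
          (fun e' => if extb (Function.update ω vf true) e'.1
            && extb (Function.update ω vf true) e'.2 then (0:ℝ) else 1) heE
      rw [← h0]
      have hfac : (if extb (Function.update ω vf true) e.1
            && extb (Function.update ω vf true) e.2 then (0:ℝ) else 1)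
          = (if extb ω u then (0:ℝ) else 1) := by
        rcases hvu with ⟨h, h'⟩ | ⟨h, h'⟩
        · rw [← h, ← h']
          rw [show extb (Function.update ω vf true) v = true from extb_update_self,
            extb_update_ne (Ne.symm hvune)]
          simp
        · rw [← h, ← h']
          rw [show extb (Function.update ω vf true) v = true from extb_update_self,
            extb_update_ne (Ne.symm hvune)]
          cases extb ω u <;> simp
      have hrest : cE E' (Function.update ω vf true) = cE E' ω := cE_update hvE'
      rw [hfac, hrest]
    have hsplit : (if extb ω u then (0:ℝ) else 1) * cE E' ω
        = (if extb ω u then (0:ℝ) else 1) * cE Eu' ω := by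
      cases hcase : extb ω u
      · norm_num
        have hsp : cE E' ω = cE Eu' ω * ∏ e' ∈ E'.filter (fun e' => (e'.1 = u ∨ e'.2 = u)),
            (if extb ω e'.1 && extb ω e'.2 then (0:ℝ) else 1) := by
          rw [hEu']
          unfold cE
          rw [mul_comm, ← Finset.prod_filter_mul_prod_filter_not E' (fun e' => (e'.1 = u ∨ e'.2 = u))]
        have hone : ∏ e' ∈ E'.filter (fun e' => (e'.1 = u ∨ e'.2 = u)),
            (if extb ω e'.1 && extb ω e'.2 then (0:ℝ) else 1) = 1 := by
          refine Finset.prod_eq_one fun e' he' => ?_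
          have hm := (Finset.mem_filter.mp he').2
          rcases hm with h | h <;> rw [h] <;> simp [hcase]
        rw [hsp, hone, mul_one]
      · norm_num
    have hins : (if extb ω u then (0:ℝ) else 1) * dF F ω = dF (insert u F) ω := by
      unfold dF
      rw [Finset.prod_insert hunotF]
    rw [hwr, hce, hdf, hsplit]
    calc p * R * ((if extb ω u then (0:ℝ) else 1) * cE Eu' ω * dF F ω)
        = p * R * (cE Eu' ω * ((if extb ω u then (0:ℝ) else 1) * dF F ω)) := by ring
      _ = p * (R * (cE Eu' ω * dF (insert u F) ω)) := by rw [hins]; ring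
  rw [hA, hB]

end Aux4
section Aux5
open Finset

variable {p : ℝ} {N : ℕ}

lemma QE_empty (hp0 : 0 ≤ p) (hp1 : p ≤ 1) {F : Finset ℕ} (hFN : ∀ v ∈ F, v < N + 1) :
    QE p N ∅ F = (1-p)^F.card := by
  classical
  set F' : Finset (Fin (N+1)) := F.attachFin hFN with hF'
  have hdf : ∀ ω : Fin (N+1) → Bool,
      dF F ω = ∏ i : Fin (N+1), (if i ∈ F' then (if ω i then (0:ℝ) else 1) else 1) := by
    intro ω
    rw [Finset.prod_ite_mem, Finset.univ_inter]
    refine (Finset.prod_bij (fun a ha => (⟨a, hFN a ha⟩ : Fin (N+1))) ?_ ?_ ?_ ?_)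
    · intro a ha; simpa [hF', Finset.mem_attachFin] using ha
    · intro a ha b hb hab
      simpa [Fin.ext_iff] using hab
    · intro b hb
      refine ⟨(b : ℕ), ?_, ?_⟩
      · simpa [hF', Finset.mem_attachFin] using hb
      · simp
    · intro a ha
      rw [extb_lt (hFN a ha)]
  have hsum : ∀ i : Fin (N+1),
      (∑ b : Bool, (wt p b * (if i ∈ F' then (if b then (0:ℝ) else 1) else 1)))
        = ((wt p true * (if i ∈ F' then (0:ℝ) else 1)) + (wt p false * 1)) := by
    intro i
    rw [Fintype.sum_bool]
    by_cases h : i ∈ F' <;> simp [h]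
  have key : QE p N ∅ F
      = ∏ i : Fin (N+1), ((wt p true * (if i ∈ F' then (0:ℝ) else 1)) + (wt p false * 1)) := by
    unfold QE
    rw [show (∏ i : Fin (N + 1),
        ((wt p true * (if i ∈ F' then (0:ℝ) else 1)) + (wt p false * 1)))
      = ∏ i : Fin (N+1), ∑ b : Bool,
          (wt p b * (if i ∈ F' then (if b then (0:ℝ) else 1) else 1)) from
      Finset.prod_congr rfl fun i _ => (hsum i).symm]
    rw [Finset.prod_univ_sum (fun _ => (Finset.univ : Finset Bool))]
    rw [Fintype.piFinset_univ]
    refine Finset.sum_congr rfl fun ω _ => ?_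
    rw [hdf ω, cE]
    rw [Finset.prod_empty, one_mul]
    unfold wprod
    rw [← Finset.prod_mul_distrib]
  rw [key]
  have : ∀ i : Fin (N+1), ((wt p true * (if i ∈ F' then (0:ℝ) else 1)) + (wt p false * 1))
      = (if i ∈ F' then (1-p) else 1) := by
    intro i
    by_cases h : i ∈ F' <;> simp [h, wt]
  rw [Finset.prod_congr rfl fun i _ => this i]
  rw [Finset.prod_ite_mem, Finset.univ_inter, Finset.prod_const]
  rw [hF', Finset.card_attachFin]

lemma QE_bounds (hp0 : 0 < p) (hp1 : p < 1) {m n : ℕ} (hmn : m ≤ n) :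
    ∀ (k : ℕ) (E : Finset (ℕ × ℕ)) (F : Finset ℕ), E.card = k →
    (∀ e ∈ E, e.1 < e.2 ∧ (e.1 + e.2 = m ∨ e.1 + e.2 = n) ∧ e.2 ≤ N) →
    (∀ v ∈ F, v < N + 1 ∧ ∀ e ∈ E, v ≠ e.1 ∧ v ≠ e.2) →
    (1-p^2)^E.card * (1-p)^F.card ≤ QE p N E F ∧
      QE p N E F ≤ (1-p^2+p^3)^E.card * (1-p)^F.card := by
  classical
  intro k
  induction k using Nat.strong_induction_on with
  | _ k ih =>
  intro E F hcard hE hF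
  rcases E.eq_empty_or_nonempty with rfl | hne
  · rw [QE_empty hp0.le hp1.le (fun v hv => (hF v hv).1)]
    simp
  · obtain ⟨e, heE, v, hv, hleaf⟩ :=
      exists_leaf hmn (fun e' he' => ⟨(hE e' he').1, (hE e' he').2.1⟩) hne
    have h1 := hE e heE
    obtain ⟨u, hvu⟩ : ∃ u, (v = e.1 ∧ u = e.2) ∨ (v = e.2 ∧ u = e.1) := by
      rcases hv with h | h
      · exact ⟨e.2, Or.inl ⟨h, rfl⟩⟩
      · exact ⟨e.1, Or.inr ⟨h, rfl⟩⟩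
    have hpeel := QE_peel (p := p) heE (fun e' he' => ⟨(hE e' he').1, (hE e' he').2.2⟩)
      (fun w hw e' he' => (hF w hw).2 e' he') hvu hleaf
    set E' := E.erase e with hE'd
    set E'' := E'.filter (fun e' => ¬(e'.1 = u ∨ e'.2 = u)) with hE''d
    have hkpos : 0 < E.card := Finset.card_pos.mpr hne
    obtain ⟨j, hj⟩ : ∃ j, E.card = j + 1 := ⟨E.card - 1, by omega⟩
    have hc' : E'.card = j := by rw [hE'd, Finset.card_erase_of_mem heE]; omega
    have hc''le : E''.card ≤ j := le_trans (Finset.card_filter_le _ _) hc'.le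
    have hue : u = e.1 ∨ u = e.2 := by rcases hvu with ⟨_, h⟩ | ⟨_, h⟩ <;> tauto
    have hEu1 : (E'.filter (fun e' => (e'.1 = u ∨ e'.2 = u))).card ≤ 1 := by
      rw [Finset.card_le_one]
      intro a ha b hb
      obtain ⟨ha1, ha2⟩ := Finset.mem_filter.mp ha
      obtain ⟨hb1, hb2⟩ := Finset.mem_filter.mp hb
      have haE : a ∈ E := Finset.mem_of_mem_erase ha1
      have hbE : b ∈ E := Finset.mem_of_mem_erase hb1
      have hau : u = a.1 ∨ u = a.2 := ha2.imp Eq.symm Eq.symm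
      have hbu : u = b.1 ∨ u = b.2 := hb2.imp Eq.symm Eq.symm
      have hsa : a.1 + a.2 ≠ e.1 + e.2 := fun hcc =>
        (Finset.ne_of_mem_erase ha1) (edge_eq hcc (hE a haE).1 h1.1 hau hue)
      have hsb : b.1 + b.2 ≠ e.1 + e.2 := fun hcc =>
        (Finset.ne_of_mem_erase hb1) (edge_eq hcc (hE b hbE).1 h1.1 hbu hue)
      have hsab : a.1 + a.2 = b.1 + b.2 := by
        rcases (hE a haE).2.1 with hA | hA <;> rcases (hE b hbE).2.1 with hB | hB <;>
          rcases h1.2.1 with hC | hC <;> omega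
      exact edge_eq hsab (hE a haE).1 (hE b hbE).1 hau hbu
    have hc''ge : j ≤ E''.card + 1 := by
      have hsum := Finset.card_filter_add_card_filter_not
        (s := E') (p := fun e' => (e'.1 = u ∨ e'.2 = u))
      have : E''.card = (E'.filter (fun e' => ¬(e'.1 = u ∨ e'.2 = u))).card := by rw [hE''d]
      omega
    have huN : u < N + 1 := by rcases hue with h | h <;> omega
    have hypE' : ∀ e' ∈ E', e'.1 < e'.2 ∧ (e'.1 + e'.2 = m ∨ e'.1 + e'.2 = n) ∧ e'.2 ≤ N :=
      fun e' he' => hE e' (Finset.mem_of_mem_erase he')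
    have hypF' : ∀ w ∈ F, w < N + 1 ∧ ∀ e' ∈ E', w ≠ e'.1 ∧ w ≠ e'.2 :=
      fun w hw => ⟨(hF w hw).1, fun e' he' => (hF w hw).2 e' (Finset.mem_of_mem_erase he')⟩
    have IH1 := ih j (by omega) E' F hc' hypE' hypF'
    have hypE'' : ∀ e' ∈ E'', e'.1 < e'.2 ∧ (e'.1 + e'.2 = m ∨ e'.1 + e'.2 = n) ∧ e'.2 ≤ N :=
      fun e' he' => hypE' e' (Finset.mem_of_mem_filter e' he')
    have hypF'' : ∀ w ∈ insert u F, w < N + 1 ∧ ∀ e' ∈ E'', w ≠ e'.1 ∧ w ≠ e'.2 := by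
      intro w hw
      rcases Finset.mem_insert.mp hw with rfl | hw'
      · refine ⟨huN, fun e' he' => ?_⟩
        have hnt := (Finset.mem_filter.mp he').2
        push_neg at hnt
        exact ⟨Ne.symm hnt.1, Ne.symm hnt.2⟩
      · exact ⟨(hF w hw').1, fun e' he' => (hF w hw').2 e'
          (Finset.mem_of_mem_erase (Finset.mem_of_mem_filter e' he'))⟩
    have IH2 := ih E''.card (by omega) E'' (insert u F) rfl hypE'' hypF''
    have huF : u ∉ F := fun hc => by
      rcases hvu with ⟨_, h⟩ | ⟨_, h⟩
      · exact ((hF u hc).2 e heE).2 h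
      · exact ((hF u hc).2 e heE).1 h
    rw [Finset.card_insert_of_notMem huF] at IH2
    rw [hc'] at IH1
    clear hE''d hEu1 hypE'' hypF'' hypE' hypF' hleaf hE hF ih
    clear_value E''
    clear hE'd
    clear_value E'
    -- numeric facts
    have hq : (0:ℝ) < 1 - p := by linarith
    have hx0 : (0:ℝ) < 1 - p^2 := by nlinarith
    have hx1 : (1:ℝ) - p^2 ≤ 1 := by nlinarith
    have hμ0 : (0:ℝ) < 1 - p^2 + p^3 := by nlinarith
    have hμ1 : (1:ℝ) - p^2 + p^3 ≤ 1 := by nlinarith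
    have hxμ : (1:ℝ) - p^2 ≤ 1 - p^2 + p^3 := by nlinarith
    have hfpos : (0:ℝ) ≤ (1-p)^F.card := le_of_lt (pow_pos hq _)
    rw [hj]
    constructor
    · -- lower bound
      have e1 : (1-p^2)^j * (1-p)^F.card ≤ QE p N E' F := IH1.1
      have e2 : (1-p^2)^j * ((1-p)^F.card * (1-p)) ≤ QE p N E'' (insert u F) := by
        have h2 : (1-p^2)^j ≤ (1-p^2)^E''.card :=
          pow_le_pow_of_le_one hx0.le hx1 hc''le
        calc (1-p^2)^j * ((1-p)^F.card * (1-p))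
            ≤ (1-p^2)^E''.card * ((1-p)^F.card * (1-p)) := by
              apply mul_le_mul_of_nonneg_right h2; positivity
          _ = (1-p^2)^E''.card * (1-p)^(F.card+1) := by rw [pow_succ (1-p) F.card]
          _ ≤ QE p N E'' (insert u F) := IH2.1
      rw [hpeel]
      calc (1-p^2)^(j+1) * (1-p)^F.card
          = (1-p) * ((1-p^2)^j * (1-p)^F.card)
            + p * ((1-p^2)^j * ((1-p)^F.card * (1-p))) := by ring
        _ ≤ (1-p) * QE p N E' F + p * QE p N E'' (insert u F) := by
            apply add_le_add
            · exact mul_le_mul_of_nonneg_left e1 hq.le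
            · exact mul_le_mul_of_nonneg_left e2 hp0.le
    · -- upper bound
      rw [hpeel]
      have e1 : QE p N E' F ≤ (1-p^2+p^3)^j * (1-p)^F.card := IH1.2
      rcases eq_or_lt_of_le hc''le with hceq | hclt
      · -- E''.card = j
        have e2 : QE p N E'' (insert u F) ≤ (1-p^2+p^3)^j * ((1-p)^F.card * (1-p)) := by
          have := IH2.2
          rw [hceq, pow_succ (1-p) F.card] at this
          linarith [this]
        calc (1-p) * QE p N E' F + p * QE p N E'' (insert u F)
            ≤ (1-p) * ((1-p^2+p^3)^j * (1-p)^F.card)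
              + p * ((1-p^2+p^3)^j * ((1-p)^F.card * (1-p))) := by
              apply add_le_add
              · exact mul_le_mul_of_nonneg_left e1 hq.le
              · exact mul_le_mul_of_nonneg_left e2 hp0.le
          _ = ((1-p^2+p^3)^j * (1-p)^F.card) * (1-p^2) := by ring
          _ ≤ ((1-p^2+p^3)^j * (1-p)^F.card) * (1-p^2+p^3) := by
              apply mul_le_mul_of_nonneg_left hxμ
              positivity
          _ = (1-p^2+p^3)^(j+1) * (1-p)^F.card := by ring
      · -- E''.card < j, so j = j' + 1 and j' ≤ E''.card
        obtain ⟨j', hj'⟩ : ∃ j', j = j' + 1 := ⟨j - 1, by omega⟩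
        have hj'le : j' ≤ E''.card := by omega
        have hpow : (1-p^2+p^3)^E''.card ≤ (1-p^2+p^3)^j' :=
          pow_le_pow_of_le_one hμ0.le hμ1 hj'le
        have e2 : QE p N E'' (insert u F) ≤ (1-p^2+p^3)^j' * ((1-p)^F.card * (1-p)) := by
          calc QE p N E'' (insert u F)
              ≤ (1-p^2+p^3)^E''.card * (1-p)^(F.card+1) := IH2.2
            _ ≤ (1-p^2+p^3)^j' * (1-p)^(F.card+1) :=
                mul_le_mul_of_nonneg_right hpow (by positivity)
            _ = (1-p^2+p^3)^j' * ((1-p)^F.card * (1-p)) := by rw [pow_succ (1-p) F.card]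
        have hkey : (1-p) * (1-p^2+p^3) + p * (1-p) ≤ (1-p^2+p^3)^2 := by nlinarith
        calc (1-p) * QE p N E' F + p * QE p N E'' (insert u F)
            ≤ (1-p) * ((1-p^2+p^3)^j * (1-p)^F.card)
              + p * ((1-p^2+p^3)^j' * ((1-p)^F.card * (1-p))) := by
              apply add_le_add
              · exact mul_le_mul_of_nonneg_left e1 hq.le
              · exact mul_le_mul_of_nonneg_left e2 hp0.le
          _ = ((1-p) * (1-p^2+p^3) + p * (1-p)) * ((1-p^2+p^3)^j' * (1-p)^F.card) := by
              rw [hj']; ring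
          _ ≤ (1-p^2+p^3)^2 * ((1-p^2+p^3)^j' * (1-p)^F.card) := by
              apply mul_le_mul_of_nonneg_right hkey
              positivity
          _ = (1-p^2+p^3)^(j+1) * (1-p)^F.card := by rw [hj']; ring
end Aux5
section Aux6
open Finset

variable {p : ℝ} {N : ℕ}

open scoped Classical in
noncomputable def indMiss (N : ℕ) (n : ℕ) (ω : Fin (N+1) → Bool) : ℝ :=
  if inSumset ω n then 0 else 1

def nEdges (n : ℕ) : Finset (ℕ × ℕ) := (Finset.range ((n+1)/2)).image fun i => (i, n - i)

def nMid (n : ℕ) : Finset ℕ := if n % 2 = 0 then {n / 2} else ∅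

lemma nEdges_mem {n : ℕ} {e : ℕ × ℕ} (he : e ∈ nEdges n) :
    e.1 < e.2 ∧ e.1 + e.2 = n ∧ e.2 ≤ n := by
  obtain ⟨i, hi, rfl⟩ := Finset.mem_image.mp he
  have := Finset.mem_range.mp hi
  refine ⟨by omega, by omega, by omega⟩

lemma nEdges_card (n : ℕ) : (nEdges n).card = (n+1)/2 := by
  rw [nEdges, Finset.card_image_of_injective _ (fun i j h => congrArg Prod.fst h),
    Finset.card_range]

lemma nMid_notEndpoint {n v : ℕ} (hv : v ∈ nMid n) {e : ℕ × ℕ} (he : e ∈ nEdges n) :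
    v ≠ e.1 ∧ v ≠ e.2 := by
  have h1 := nEdges_mem he
  have h2 : n % 2 = 0 ∧ v = n / 2 := by
    unfold nMid at hv
    split at hv
    · exact ⟨by assumption, by simpa using hv⟩
    · simp at hv
  omega

lemma nMid_le {n v : ℕ} (hv : v ∈ nMid n) : v ≤ n := by
  unfold nMid at hv
  split at hv
  · have : v = n / 2 := by simpa using hv
    omega
  · simp at hv

lemma nMid_card_le (n : ℕ) : (nMid n).card ≤ 1 := by
  unfold nMid; split <;> simp

lemma indMiss_eq (hn : n ≤ N) (ω : Fin (N+1) → Bool) :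
    indMiss N n ω = cE (nEdges n) ω * dF (nMid n) ω := by
  classical
  by_cases h : inSumset ω n
  · rw [indMiss, if_pos h]
    obtain ⟨a, b, ha, hb, hab⟩ := h
    rcases lt_trichotomy (a : ℕ) (b : ℕ) with hlt | heq | hgt
    · have hmem : ((a : ℕ), (b : ℕ)) ∈ nEdges n := by
        rw [nEdges, Finset.mem_image]
        exact ⟨a, Finset.mem_range.mpr (by omega), by rw [show n - (a:ℕ) = (b:ℕ) by omega]⟩
      have : cE (nEdges n) ω = 0 := by
        refine Finset.prod_eq_zero hmem ?_
        have e1 : extb ω (a : ℕ) = true := by rw [extb_lt a.isLt]; simpa using ha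
        have e2 : extb ω (b : ℕ) = true := by rw [extb_lt b.isLt]; simpa using hb
        simp [e1, e2]
      rw [this, zero_mul]
    · have hmid : (a : ℕ) ∈ nMid n := by
        unfold nMid
        rw [if_pos (by omega)]
        simp; omega
      have : dF (nMid n) ω = 0 := by
        refine Finset.prod_eq_zero hmid ?_
        have e1 : extb ω (a : ℕ) = true := by rw [extb_lt a.isLt]; simpa using ha
        simp [e1]
      rw [this, mul_zero]
    · have hmem : ((b : ℕ), (a : ℕ)) ∈ nEdges n := by
        rw [nEdges, Finset.mem_image]
        exact ⟨b, Finset.mem_range.mpr (by omega), by rw [show n - (b:ℕ) = (a:ℕ) by omega]⟩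
      have : cE (nEdges n) ω = 0 := by
        refine Finset.prod_eq_zero hmem ?_
        have e1 : extb ω (a : ℕ) = true := by rw [extb_lt a.isLt]; simpa using ha
        have e2 : extb ω (b : ℕ) = true := by rw [extb_lt b.isLt]; simpa using hb
        simp [e1, e2]
      rw [this, zero_mul]
  · rw [indMiss, if_neg h]
    have hc : cE (nEdges n) ω = 1 := by
      refine Finset.prod_eq_one fun e he => ?_
      have h1 := nEdges_mem he
      rw [if_neg]
      intro hcon
      rw [Bool.and_eq_true] at hcon
      have he1 : e.1 < N + 1 := by omega
      have he2 : e.2 < N + 1 := by omega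
      refine h ⟨⟨e.1, he1⟩, ⟨e.2, he2⟩, ?_, ?_, by simp; omega⟩
      · have h9 := hcon.1; rwa [extb_lt he1] at h9
      · have h9 := hcon.2; rwa [extb_lt he2] at h9
    have hd : dF (nMid n) ω = 1 := by
      refine Finset.prod_eq_one fun v hv => ?_
      have h1 := nMid_le hv
      have h2 : n % 2 = 0 ∧ v = n / 2 := by
        unfold nMid at hv
        split at hv
        · exact ⟨by assumption, by simpa using hv⟩
        · simp at hv
      have hvN : v < N + 1 := by omega
      rw [if_neg]
      intro hcon
      refine h ⟨⟨v, hvN⟩, ⟨v, hvN⟩, ?_, ?_, by simp; omega⟩ <;>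
        · rwa [extb_lt hvN] at hcon
    rw [hc, hd, one_mul]

lemma indMiss_nonneg (n : ℕ) (ω : Fin (N+1) → Bool) : 0 ≤ indMiss N n ω := by
  rw [indMiss]; split <;> norm_num

lemma indMiss_mul_le (hm : m ≤ N) (hn : n ≤ N) (ω : Fin (N+1) → Bool) :
    indMiss N m ω * indMiss N n ω ≤ cE (nEdges m ∪ nEdges n) ω := by
  classical
  by_cases h : inSumset ω m
  · rw [indMiss, if_pos h, zero_mul]; exact cE_nonneg
  · by_cases h' : inSumset ω n
    · rw [indMiss, indMiss, if_pos h', mul_zero]; exact cE_nonneg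
    · rw [indMiss, indMiss, if_neg h, if_neg h', one_mul]
      have : cE (nEdges m ∪ nEdges n) ω = 1 := by
        refine Finset.prod_eq_one fun e he => ?_
        rcases Finset.mem_union.mp he with hh | hh
        · have h1 := nEdges_mem hh
          rw [if_neg]
          intro hcon
          rw [Bool.and_eq_true] at hcon
          have he1 : e.1 < N + 1 := by omega
          have he2 : e.2 < N + 1 := by omega
          refine h ⟨⟨e.1, he1⟩, ⟨e.2, he2⟩, ?_, ?_, by simp; omega⟩
          · have h9 := hcon.1; rwa [extb_lt he1] at h9
          · have h9 := hcon.2; rwa [extb_lt he2] at h9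
        · have h1 := nEdges_mem hh
          rw [if_neg]
          intro hcon
          rw [Bool.and_eq_true] at hcon
          have he1 : e.1 < N + 1 := by omega
          have he2 : e.2 < N + 1 := by omega
          refine h' ⟨⟨e.1, he1⟩, ⟨e.2, he2⟩, ?_, ?_, by simp; omega⟩
          · have h9 := hcon.1; rwa [extb_lt he1] at h9
          · have h9 := hcon.2; rwa [extb_lt he2] at h9
      rw [this]

end Aux6
section Aux7
open Finset

variable {p : ℝ} {N : ℕ}

noncomputable def Q2 (p : ℝ) (N m n : ℕ) : ℝ :=
  ∑ ω : Fin (N+1) → Bool, wprod p ω * (indMiss N m ω * indMiss N n ω)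

lemma Q2_symm (m n : ℕ) : Q2 p N m n = Q2 p N n m :=
  Finset.sum_congr rfl fun ω _ => by rw [mul_comm (indMiss N m ω)]

lemma Q2_le_offdiag (hp0 : 0 < p) (hp1 : p < 1) {m n : ℕ} (hn : n ≤ N) (hmn : m < n) :
    Q2 p N m n ≤ (1-p^2+p^3)^((m+1)/2) * (1-p^2+p^3)^((n+1)/2) := by
  classical
  have hdisj : Disjoint (nEdges m) (nEdges n) := by
    rw [Finset.disjoint_left]
    intro e hem hen
    have h1 := nEdges_mem hem
    have h2 := nEdges_mem hen
    omega
  have step1 : Q2 p N m n ≤ QE p N (nEdges m ∪ nEdges n) ∅ := by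
    refine Finset.sum_le_sum fun ω _ => ?_
    have hd : dF (∅ : Finset ℕ) ω = 1 := Finset.prod_empty
    rw [hd, mul_one]
    exact mul_le_mul_of_nonneg_left (indMiss_mul_le (by omega) hn ω)
      (wprod_nonneg hp0.le hp1.le ω)
  have hE : ∀ e ∈ nEdges m ∪ nEdges n,
      e.1 < e.2 ∧ (e.1 + e.2 = m ∨ e.1 + e.2 = n) ∧ e.2 ≤ N := by
    intro e he
    rcases Finset.mem_union.mp he with hh | hh
    · have h1 := nEdges_mem hh; exact ⟨h1.1, Or.inl h1.2.1, by omega⟩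
    · have h1 := nEdges_mem hh; exact ⟨h1.1, Or.inr h1.2.1, by omega⟩
  have step2 := (QE_bounds hp0 hp1 hmn.le (nEdges m ∪ nEdges n).card
    (nEdges m ∪ nEdges n) ∅ rfl hE (by simp)).2
  have hcard : (nEdges m ∪ nEdges n).card = (m+1)/2 + (n+1)/2 := by
    rw [Finset.card_union_of_disjoint hdisj, nEdges_card, nEdges_card]
  rw [hcard, Finset.card_empty, pow_zero, mul_one, pow_add] at step2
  exact le_trans step1 step2

lemma Q2_diag (hp0 : 0 < p) (hp1 : p < 1) {n : ℕ} (hn : n ≤ N) :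
    (1-p^2)^((n+1)/2) * (1-p)^((nMid n).card) ≤ Q2 p N n n ∧
      Q2 p N n n ≤ (1-p^2+p^3)^((n+1)/2) * (1-p)^((nMid n).card) := by
  classical
  have heq : Q2 p N n n = QE p N (nEdges n) (nMid n) := by
    refine Finset.sum_congr rfl fun ω _ => ?_
    have : indMiss N n ω * indMiss N n ω = indMiss N n ω := by
      rw [indMiss]; split <;> norm_num
    rw [this, indMiss_eq hn ω]
  have hE : ∀ e ∈ nEdges n, e.1 < e.2 ∧ (e.1 + e.2 = n ∨ e.1 + e.2 = n) ∧ e.2 ≤ N := by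
    intro e he
    have h1 := nEdges_mem he
    exact ⟨h1.1, Or.inl h1.2.1, by omega⟩
  have hF : ∀ v ∈ nMid n, v < N + 1 ∧ ∀ e ∈ nEdges n, v ≠ e.1 ∧ v ≠ e.2 := by
    intro v hv
    exact ⟨by have := nMid_le hv; omega, fun e he => nMid_notEndpoint hv he⟩
  have := QE_bounds hp0 hp1 (le_refl n) (nEdges n).card (nEdges n) (nMid n) rfl hE hF
  rw [nEdges_card] at this
  rw [heq]
  exact this

lemma sum_Q2 (hp0 : 0 < p) (hp1 : p < 1) :
    ∑ ω : Fin (N+1) → Bool,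
        wprod p ω * (∑ n ∈ Finset.range (N+1), indMiss N n ω)^2
      = ∑ m ∈ Finset.range (N+1), ∑ n ∈ Finset.range (N+1), Q2 p N m n := by
  have step1 : ∀ ω : Fin (N+1) → Bool,
      wprod p ω * (∑ n ∈ Finset.range (N+1), indMiss N n ω)^2
        = ∑ m ∈ Finset.range (N+1), ∑ n ∈ Finset.range (N+1),
            wprod p ω * (indMiss N m ω * indMiss N n ω) := by
    intro ω
    rw [sq, Finset.sum_mul_sum, Finset.mul_sum]
    refine Finset.sum_congr rfl fun m _ => ?_
    rw [Finset.mul_sum]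
  rw [Finset.sum_congr rfl fun ω _ => step1 ω]
  rw [Finset.sum_comm]
  refine Finset.sum_congr rfl fun m _ => ?_
  rw [Finset.sum_comm]
  rfl

lemma EY2_upper (hp0 : 0 < p) (hp1 : p < 1) :
    ∑ ω : Fin (N+1) → Bool,
        wprod p ω * (∑ n ∈ Finset.range (N+1), indMiss N n ω)^2
      ≤ (∑ n ∈ Finset.range (N+1), (1-p^2+p^3)^((n+1)/2))^2
        + ∑ n ∈ Finset.range (N+1), (1-p^2+p^3)^((n+1)/2) := by
  classical
  have hq : (0:ℝ) < 1 - p := by linarith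
  have hμ0 : (0:ℝ) < 1 - p^2 + p^3 := by nlinarith
  rw [sum_Q2 hp0 hp1]
  have key : ∀ m ∈ Finset.range (N+1), ∀ n ∈ Finset.range (N+1),
      Q2 p N m n ≤ (1-p^2+p^3)^((m+1)/2) * (1-p^2+p^3)^((n+1)/2)
        + (if n = m then (1-p^2+p^3)^((n+1)/2) else 0) := by
    intro m hm n hn
    rcases lt_trichotomy m n with h | h | h
    · rw [if_neg (by omega)]
      have := Q2_le_offdiag hp0 hp1 (by simpa [Nat.lt_succ_iff] using hn) h
      linarith
    · subst h
      rw [if_pos rfl]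
      have h2 := (Q2_diag hp0 hp1 (by simpa [Nat.lt_succ_iff] using hn)).2
      have h3 : (1-p)^((nMid m).card) ≤ 1 :=
        pow_le_one₀ hq.le (by linarith)
      have h4 : Q2 p N m m ≤ (1-p^2+p^3)^((m+1)/2) := by
        calc Q2 p N m m ≤ (1-p^2+p^3)^((m+1)/2) * (1-p)^((nMid m).card) := h2
          _ ≤ (1-p^2+p^3)^((m+1)/2) * 1 := by
              exact mul_le_mul_of_nonneg_left h3 (by positivity)
          _ = (1-p^2+p^3)^((m+1)/2) := mul_one _
      nlinarith [pow_pos hμ0 ((m+1)/2)]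
    · rw [if_neg (by omega)]
      rw [Q2_symm]
      have := Q2_le_offdiag hp0 hp1 (by simpa [Nat.lt_succ_iff] using hm) h
      linarith
  calc ∑ m ∈ Finset.range (N+1), ∑ n ∈ Finset.range (N+1), Q2 p N m n
      ≤ ∑ m ∈ Finset.range (N+1), ∑ n ∈ Finset.range (N+1),
          ((1-p^2+p^3)^((m+1)/2) * (1-p^2+p^3)^((n+1)/2)
            + (if n = m then (1-p^2+p^3)^((n+1)/2) else 0)) := by
        refine Finset.sum_le_sum fun m hm => Finset.sum_le_sum fun n hn => key m hm n hn
    _ = (∑ n ∈ Finset.range (N+1), (1-p^2+p^3)^((n+1)/2))^2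
        + ∑ n ∈ Finset.range (N+1), (1-p^2+p^3)^((n+1)/2) := by
        rw [Finset.sum_congr rfl (fun m _ => Finset.sum_add_distrib)]
        rw [Finset.sum_add_distrib]
        congr 1
        · rw [pow_two (∑ n ∈ Finset.range (N+1), (1-p^2+p^3)^((n+1)/2)),
            Finset.sum_mul_sum]
        · refine Finset.sum_congr rfl fun m hm => ?_
          rw [Finset.sum_ite_eq' (Finset.range (N+1)) m (fun n => (1-p^2+p^3)^((n+1)/2)),
            if_pos hm]

lemma EY_lower (hp0 : 0 < p) (hp1 : p < 1) :
    (1-p) * (∑ n ∈ Finset.range (N+1), (Real.sqrt (1-p^2))^(n+1))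
      ≤ ∑ ω : Fin (N+1) → Bool,
          wprod p ω * (∑ n ∈ Finset.range (N+1), indMiss N n ω) := by
  classical
  have hq : (0:ℝ) < 1 - p := by linarith
  have hx0 : (0:ℝ) < 1 - p^2 := by nlinarith
  have hr0 : (0:ℝ) ≤ Real.sqrt (1-p^2) := Real.sqrt_nonneg _
  have hr1 : Real.sqrt (1-p^2) ≤ 1 := by
    exact Real.sqrt_le_one.mpr (by nlinarith)
  have hrestate : ∑ ω : Fin (N+1) → Bool,
      wprod p ω * (∑ n ∈ Finset.range (N+1), indMiss N n ω)
        = ∑ n ∈ Finset.range (N+1), Q2 p N n n := by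
    simp only [Finset.mul_sum]
    rw [Finset.sum_comm]
    refine Finset.sum_congr rfl fun n _ => Finset.sum_congr rfl fun ω _ => ?_
    have hii : indMiss N n ω * indMiss N n ω = indMiss N n ω := by
      rw [indMiss]; split <;> norm_num
    rw [hii]
  rw [hrestate, Finset.mul_sum]
  refine Finset.sum_le_sum fun n hn => ?_
  have hnN : n ≤ N := by simpa [Nat.lt_succ_iff] using hn
  have hlow := (Q2_diag hp0 hp1 hnN).1
  have h1 : (1-p) ≤ (1-p)^((nMid n).card) := by
    calc (1-p) = (1-p)^1 := (pow_one _).symm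
      _ ≤ (1-p)^((nMid n).card) :=
        pow_le_pow_of_le_one hq.le (by linarith) (nMid_card_le n)
  have h2 : (Real.sqrt (1-p^2))^(n+1) ≤ (1-p^2)^((n+1)/2) := by
    have hxr : (1-p^2)^((n+1)/2) = (Real.sqrt (1-p^2))^(2*((n+1)/2)) := by
      rw [pow_mul, Real.sq_sqrt hx0.le]
    rw [hxr]
    exact pow_le_pow_of_le_one hr0 hr1 (by omega)
  calc (1-p) * (Real.sqrt (1-p^2))^(n+1)
      ≤ (1-p^2)^((n+1)/2) * (1-p)^((nMid n).card) := by
        rw [mul_comm]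
        exact mul_le_mul h2 h1 hq.le (by positivity)
    _ ≤ Q2 p N n n := hlow

lemma cauchy_schwarz_w (hp0 : 0 < p) (hp1 : p < 1) (g : (Fin (N+1) → Bool) → ℝ) :
    (∑ ω : Fin (N+1) → Bool, wprod p ω * g ω)^2
      ≤ ∑ ω : Fin (N+1) → Bool, wprod p ω * (g ω)^2 := by
  have key := Finset.sum_mul_sq_le_sq_mul_sq Finset.univ
    (fun ω : Fin (N+1) → Bool => Real.sqrt (wprod p ω))
    (fun ω => Real.sqrt (wprod p ω) * g ω)
  have h1 : ∀ ω : Fin (N+1) → Bool,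
      Real.sqrt (wprod p ω) * (Real.sqrt (wprod p ω) * g ω) = wprod p ω * g ω := by
    intro ω
    rw [← mul_assoc, Real.mul_self_sqrt (wprod_nonneg hp0.le hp1.le ω)]
  have h2 : ∀ ω : Fin (N+1) → Bool, (Real.sqrt (wprod p ω))^2 = wprod p ω := fun ω =>
    Real.sq_sqrt (wprod_nonneg hp0.le hp1.le ω)
  have h3 : ∀ ω : Fin (N+1) → Bool,
      (Real.sqrt (wprod p ω) * g ω)^2 = wprod p ω * (g ω)^2 := by
    intro ω
    rw [mul_pow, h2 ω]
  rw [Finset.sum_congr rfl fun ω _ => h1 ω] at key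
  rw [Finset.sum_congr rfl fun ω _ => h2 ω] at key
  rw [Finset.sum_congr rfl fun ω _ => h3 ω] at key
  rw [sum_wprod hp0.le hp1.le, one_mul] at key
  exact key

end Aux7
section Aux8
open Finset Filter

variable {p : ℝ} {N : ℕ}

lemma Ycast (N : ℕ) (ω : Fin (N+1) → Bool) :
    ((Ycount N ω : ℕ) : ℝ) = ∑ n ∈ Finset.range (N+1), indMiss N n ω := by
  classical
  have hset : {n : ℕ | n ≤ N ∧ ¬ inSumset ω n}
      = ↑((Finset.range (N+1)).filter (fun n => ¬ inSumset ω n)) := by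
    ext n
    simp [Nat.lt_succ_iff]
  rw [Ycount, hset, Set.ncard_coe_finset, Finset.card_filter]
  push_cast
  refine Finset.sum_congr rfl fun n _ => ?_
  rw [indMiss]
  by_cases h : inSumset ω n <;> simp [h]

lemma integral_Y2 (hp0 : 0 < p) (hp1 : p < 1) (N : ℕ) :
    ∫ ω, ((Ycount N ω : ℝ)) ^ 2 ∂ prodBern p N
      = ∑ ω : Fin (N+1) → Bool,
          wprod p ω * (∑ n ∈ Finset.range (N+1), indMiss N n ω)^2 := by
  rw [integral_eq_sum hp0.le hp1.le]
  exact Finset.sum_congr rfl fun ω _ => by rw [Ycast N ω]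

lemma geom_partial_eq {r : ℝ} (hne : r ≠ 1) (M : ℕ) :
    ∑ n ∈ Finset.range M, r^n = (1 - r^M)/(1-r) := by
  rw [geom_sum_eq hne]
  rw [div_eq_div_iff (sub_ne_zero.mpr hne) (sub_ne_zero.mpr (Ne.symm hne))]
  ring

lemma geom_partial_le {r : ℝ} (h0 : 0 ≤ r) (h1 : r < 1) (M : ℕ) :
    ∑ n ∈ Finset.range M, r^n ≤ 1/(1-r) := by
  rw [geom_partial_eq (ne_of_lt h1)]
  have hpos : (0:ℝ) < 1 - r := by linarith
  rw [div_le_div_iff₀ hpos hpos]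
  have := pow_nonneg h0 M
  nlinarith

lemma S_le_U {S : ℝ → ℝ} (hp0 : 0 < p) (hp1 : p < 1)
    (hconv : Filter.Tendsto (fun N : ℕ => ∫ ω, ((Ycount N ω : ℝ)) ^ 2 ∂ prodBern p N)
      Filter.atTop (nhds (S p))) :
    S p ≤ (1/(1 - Real.sqrt (1-p^2+p^3)))^2 + 1/(1 - Real.sqrt (1-p^2+p^3)) := by
  have hμ0 : (0:ℝ) < 1 - p^2 + p^3 := by nlinarith
  have hμ1 : (1:ℝ) - p^2 + p^3 < 1 := by nlinarith [mul_pos (mul_pos hp0 hp0) (sub_pos.mpr hp1)]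
  set s := Real.sqrt (1-p^2+p^3) with hs
  have hs0 : 0 ≤ s := Real.sqrt_nonneg _
  have hs2 : s^2 = 1-p^2+p^3 := Real.sq_sqrt hμ0.le
  have hs1 : s < 1 := by nlinarith
  have h1s : (0:ℝ) < 1 - s := by linarith
  apply le_of_tendsto' hconv
  intro N
  rw [integral_Y2 hp0 hp1 N]
  refine le_trans (EY2_upper hp0 hp1) ?_
  have hsum : ∑ n ∈ Finset.range (N+1), (1-p^2+p^3)^((n+1)/2) ≤ 1/(1-s) := by
    calc ∑ n ∈ Finset.range (N+1), (1-p^2+p^3)^((n+1)/2)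
        ≤ ∑ n ∈ Finset.range (N+1), s^n := by
          refine Finset.sum_le_sum fun n _ => ?_
          have : (1-p^2+p^3)^((n+1)/2) = s^(2*((n+1)/2)) := by
            rw [pow_mul, hs2]
          rw [this]
          exact pow_le_pow_of_le_one hs0 hs1.le (by omega)
      _ ≤ 1/(1-s) := geom_partial_le hs0 hs1 _
  have hnn : (0:ℝ) ≤ ∑ n ∈ Finset.range (N+1), (1-p^2+p^3)^((n+1)/2) :=
    Finset.sum_nonneg fun n _ => by positivity
  nlinarith

lemma L_le_S {S : ℝ → ℝ} (hp0 : 0 < p) (hp1 : p < 1)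
    (hconv : Filter.Tendsto (fun N : ℕ => ∫ ω, ((Ycount N ω : ℝ)) ^ 2 ∂ prodBern p N)
      Filter.atTop (nhds (S p))) :
    ((1-p) * (Real.sqrt (1-p^2) * (1/(1 - Real.sqrt (1-p^2)))))^2 ≤ S p := by
  have hx0 : (0:ℝ) < 1 - p^2 := by nlinarith
  have hx1 : (1:ℝ) - p^2 < 1 := by nlinarith
  set r := Real.sqrt (1-p^2) with hrd
  have hr0 : 0 ≤ r := Real.sqrt_nonneg _
  have hr2 : r^2 = 1-p^2 := Real.sq_sqrt hx0.le
  have hr1 : r < 1 := by nlinarith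
  have h1r : (0:ℝ) < 1 - r := by linarith
  set B : ℕ → ℝ := fun N => ((1-p) * (r * ((1 - r^(N+1))/(1-r))))^2 with hBd
  have hBle : ∀ N : ℕ, B N ≤ ∫ ω, ((Ycount N ω : ℝ)) ^ 2 ∂ prodBern p N := by
    intro N
    rw [integral_Y2 hp0 hp1 N]
    have hsum : ∑ n ∈ Finset.range (N+1), r^(n+1) = r * ((1 - r^(N+1))/(1-r)) := by
      rw [← geom_partial_eq (ne_of_lt hr1) (N+1), Finset.mul_sum]
      exact Finset.sum_congr rfl fun n _ => pow_succ' r n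
    have hEY := EY_lower (N := N) hp0 hp1
    rw [hsum] at hEY
    have hBnn : 0 ≤ (1-p) * (r * ((1 - r^(N+1))/(1-r))) := by
      have hle1 : r^(N+1) ≤ 1 := pow_le_one₀ hr0 hr1.le
      have h2 : 0 ≤ (1 - r^(N+1))/(1-r) := div_nonneg (by linarith) h1r.le
      exact mul_nonneg (by linarith) (mul_nonneg hr0 h2)
    calc B N ≤ (∑ ω : Fin (N+1) → Bool,
          wprod p ω * (∑ n ∈ Finset.range (N+1), indMiss N n ω))^2 := by
          rw [hBd]
          exact pow_le_pow_left₀ hBnn hEY 2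
      _ ≤ ∑ ω : Fin (N+1) → Bool,
          wprod p ω * (∑ n ∈ Finset.range (N+1), indMiss N n ω)^2 :=
          cauchy_schwarz_w hp0 hp1 _
  have hBtend : Filter.Tendsto B Filter.atTop (nhds (((1-p) * (r * (1/(1-r))))^2)) := by
    have h0 : Filter.Tendsto (fun N : ℕ => r^(N+1)) Filter.atTop (nhds 0) := by
      have h1 := tendsto_pow_atTop_nhds_zero_of_lt_one hr0 hr1
      have := h1.comp (tendsto_add_atTop_nat 1)
      simpa [Function.comp_def] using this
    have t1 : Filter.Tendsto (fun N : ℕ => 1 - r^(N+1)) Filter.atTop (nhds 1) := by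
      simpa using (tendsto_const_nhds.sub h0)
    have t2 := t1.div_const (1-r)
    have t3 := t2.const_mul r
    have t4 := t3.const_mul (1-p)
    have t5 := t4.pow 2
    simpa [hBd] using t5
  exact le_of_tendsto_of_tendsto' hBtend hconv hBle

end Aux8

/-- If `S p = lim_{N→∞} E[Y_{N,p}²]`, then `p⁴·S(p) → 4` as `p → 0⁺`. -/
theorem stmt19 (S : ℝ → ℝ)
    (hS : ∀ p : ℝ, 0 < p → p < 1 →
      Filter.Tendsto (fun N : ℕ => ∫ ω, ((Ycount N ω : ℝ)) ^ 2 ∂ prodBern p N)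
        Filter.atTop (nhds (S p))) :
    Filter.Tendsto (fun p : ℝ => p ^ 4 * S p) (nhdsWithin 0 (Set.Ioi 0)) (nhds 4) := by
  have hsqx : Continuous fun p : ℝ => Real.sqrt (1 - p^2) :=
    Real.continuous_sqrt.comp (by continuity)
  have hsqm : Continuous fun p : ℝ => Real.sqrt (1 - p^2 + p^3) :=
    Real.continuous_sqrt.comp (by continuity)
  have hev : ∀ᶠ q in nhdsWithin (0:ℝ) (Set.Ioi 0),
      ((1-q) * (Real.sqrt (1-q^2) * (1 + Real.sqrt (1-q^2))))^2 ≤ q ^ 4 * S q ∧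
      q ^ 4 * S q ≤ ((1 + Real.sqrt (1-q^2+q^3))/(1-q))^2
          + q^2 * ((1 + Real.sqrt (1-q^2+q^3))/(1-q)) := by
    filter_upwards [Ioo_mem_nhdsGT_of_mem
      (show (0:ℝ) ∈ Set.Ico (0:ℝ) 1 by norm_num)] with q hq
    obtain ⟨hp0, hp1⟩ := hq
    have hconv := hS q hp0 hp1
    have hU := S_le_U hp0 hp1 hconv
    have hL := L_le_S hp0 hp1 hconv
    have hx0 : (0:ℝ) < 1 - q^2 := by nlinarith
    have hμ0 : (0:ℝ) < 1 - q^2 + q^3 := by nlinarith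
    have hr2 : (Real.sqrt (1-q^2))^2 = 1-q^2 := Real.sq_sqrt hx0.le
    have hs2 : (Real.sqrt (1-q^2+q^3))^2 = 1-q^2+q^3 := Real.sq_sqrt hμ0.le
    set r := Real.sqrt (1-q^2) with hrd
    set s := Real.sqrt (1-q^2+q^3) with hsd
    have hr0 : 0 ≤ r := Real.sqrt_nonneg _
    have hs0 : 0 ≤ s := Real.sqrt_nonneg _
    have hr1 : r < 1 := by nlinarith
    have hs1 : s < 1 := by nlinarith [mul_pos (mul_pos hp0 hp0) (sub_pos.mpr hp1)]
    have h1r : (0:ℝ) < 1 - r := by linarith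
    have h1s : (0:ℝ) < 1 - s := by linarith
    constructor
    · -- lower
      have hkey : q^2 * (1/(1-r)) = 1 + r := by
        have h1rne : (1:ℝ) - r ≠ 0 := ne_of_gt h1r
        field_simp
        linear_combination hr2
      have hid : q^4 * ((1-q) * (r * (1/(1-r))))^2
          = ((1-q) * (r * (1 + r)))^2 := by
        calc q^4 * ((1-q) * (r * (1/(1-r))))^2
            = ((1-q) * (r * (q^2 * (1/(1-r)))))^2 := by ring
          _ = ((1-q) * (r * (1 + r)))^2 := by rw [hkey]
      rw [← hid]
      exact mul_le_mul_of_nonneg_left hL (by positivity)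
    · -- upper
      have hkey : q^2 * (1/(1-s)) = (1+s)/(1-q) := by
        have h1sne : (1:ℝ) - s ≠ 0 := ne_of_gt h1s
        have h1qne : (1:ℝ) - q ≠ 0 := by linarith
        field_simp
        linear_combination hs2
      have hid : q^4 * ((1/(1-s))^2 + 1/(1-s))
          = ((1+s)/(1-q))^2 + q^2 * ((1+s)/(1-q)) := by
        calc q^4 * ((1/(1-s))^2 + 1/(1-s))
            = (q^2 * (1/(1-s)))^2 + q^2 * (q^2 * (1/(1-s))) := by ring
          _ = ((1+s)/(1-q))^2 + q^2 * ((1+s)/(1-q)) := by rw [hkey]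
      rw [← hid]
      exact mul_le_mul_of_nonneg_left hU (by positivity)
  have hlo4 : Filter.Tendsto
      (fun q : ℝ => ((1-q) * (Real.sqrt (1-q^2) * (1 + Real.sqrt (1-q^2))))^2)
      (nhdsWithin (0:ℝ) (Set.Ioi 0)) (nhds 4) := by
    have hc : Continuous
        (fun q : ℝ => ((1-q) * (Real.sqrt (1-q^2) * (1 + Real.sqrt (1-q^2))))^2) :=
      ((continuous_const.sub continuous_id).mul
        (hsqx.mul (continuous_const.add hsqx))).pow 2
    have h40 : ((1-(0:ℝ)) * (Real.sqrt (1-(0:ℝ)^2) * (1 + Real.sqrt (1-(0:ℝ)^2))))^2 = 4 := by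
      norm_num
    have := (hc.tendsto 0).mono_left (nhdsWithin_le_nhds (s := Set.Ioi (0:ℝ)))
    rw [h40] at this
    exact this
  have hhi4 : Filter.Tendsto
      (fun q : ℝ => ((1 + Real.sqrt (1-q^2+q^3))/(1-q))^2
          + q^2 * ((1 + Real.sqrt (1-q^2+q^3))/(1-q)))
      (nhdsWithin (0:ℝ) (Set.Ioi 0)) (nhds 4) := by
    have cdiv : ContinuousAt (fun q:ℝ => (1 + Real.sqrt (1-q^2+q^3))/(1-q)) 0 :=
      ContinuousAt.div (continuous_const.add hsqm).continuousAt
        (continuous_const.sub continuous_id).continuousAt (by norm_num)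
    have chi : ContinuousAt (fun q : ℝ => ((1 + Real.sqrt (1-q^2+q^3))/(1-q))^2
        + q^2 * ((1 + Real.sqrt (1-q^2+q^3))/(1-q))) 0 :=
      (cdiv.pow 2).add ((continuous_pow 2).continuousAt.mul cdiv)
    have h40 : ((1 + Real.sqrt (1-(0:ℝ)^2+(0:ℝ)^3))/(1-(0:ℝ)))^2
        + (0:ℝ)^2 * ((1 + Real.sqrt (1-(0:ℝ)^2+(0:ℝ)^3))/(1-(0:ℝ))) = 4 := by
      norm_num
    have := (chi.tendsto).mono_left (nhdsWithin_le_nhds (s := Set.Ioi (0:ℝ)))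
    rw [h40] at this
    exact this
  exact tendsto_of_tendsto_of_tendsto_of_le_of_le' hlo4 hhi4
    (hev.mono fun q h => h.1) (hev.mono fun q h => h.2)
end
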